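/- Let (M,d) be a locally compact, separable metric space. Then d_{J'₁} is a metric on D'(ℝ₊, M_Δ): it is symmetric, satisfies the triangle inequality, and d_{J'₁}(X,Y) = 0 implies X = Y. -/

import Mathlib

open Filter Set
open scoped ENNReal NNReal Topology

/-- The distance on the one-point compactification `M_Δ` of a metric space `M`, with values in
`[0,∞]`: `d(x,Δ) = ∞` for `x ∈ M`, `d(Δ,Δ) = 0`, and the original (extended) distance on `M`. -/
noncomputable def distD {M : Type*} [MetricSpace M] (x y : OnePoint M) : ℝ≥0∞ :=
  match x, y with
  | none, none => 0
  | none, some _ => ⊤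
  | some _, none => ⊤
  | some a, some b => edist a b

/-- `kill_t(X)`: the path `X` killed at time `t ∈ [0,∞]`. -/
noncomputable def kill {M : Type*} (t : ℝ≥0∞) (X : ℝ≥0 → OnePoint M) : ℝ≥0 → OnePoint M :=
  fun s => if (s : ℝ≥0∞) < t then X s else OnePoint.infty

/-- The space `D'(ℝ₊, M_Δ)`: cadlag paths in the one-point compactification `M_Δ` that stay
in `M` before some (possibly infinite) explosion time `T` and equal `Δ` from time `T` on. -/
def DPrime (M : Type*) [MetricSpace M] : Set (ℝ≥0 → OnePoint M) :=
  {X | (∀ t, ContinuousWithinAt X (Set.Ici t) t) ∧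
       (∀ t : ℝ≥0, 0 < t → ∃ L, Filter.Tendsto X (nhdsWithin t (Set.Iio t)) (nhds L)) ∧
       (∃ T : ℝ≥0∞, (∀ t : ℝ≥0, (t : ℝ≥0∞) < T → X t ≠ OnePoint.infty) ∧
                    (∀ t : ℝ≥0, T ≤ (t : ℝ≥0∞) → X t = OnePoint.infty))}

/-- The set `Λ` of time changes: strictly increasing continuous `λ : [0,∞) → [0,∞)` with
`λ(0) = 0`. -/
def TimeChanges : Set (ℝ≥0 → ℝ≥0) := {l | StrictMono l ∧ Continuous l ∧ l 0 = 0}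

/-- The norm `‖λ‖†_t = 2 max(t,1) · sup_{0 ≤ s < u ≤ t} |log((λ(u)-λ(s))/(u-s))|`,
with values in `[0,∞]`. -/
noncomputable def dagNorm (l : ℝ≥0 → ℝ≥0) (t : ℝ) : ℝ≥0∞ :=
  ENNReal.ofReal (2 * max t 1) *
    ⨆ p ∈ {p : ℝ≥0 × ℝ≥0 | p.1 < p.2 ∧ (p.2 : ℝ) ≤ t},
      ENNReal.ofReal |Real.log (((l p.2 : ℝ) - (l p.1 : ℝ)) / ((p.2 : ℝ) - (p.1 : ℝ)))|

/-- The quantity `a_ε(X,Y)` entering the definition of the extended Skorohod metric. -/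
noncomputable def aDist {M : Type*} [MetricSpace M] (ε : ℝ) (X Y : ℝ≥0 → OnePoint M) :
    ℝ≥0∞ :=
  ⨅ t ∈ {t : ℝ≥0 | |(t : ℝ) - ε⁻¹| ≤ ε}, ⨅ l ∈ TimeChanges,
    max (dagNorm l (ε + ε⁻¹))
      (⨆ s ∈ {s : ℝ≥0 | (s : ℝ) ≤ ε + ε⁻¹},
        distD (kill (ENNReal.ofReal ε⁻¹) X s) (kill (t : ℝ≥0∞) Y (l s)))

/-- The extended Skorohod `J₁`-distance `d_{J'₁}` on `D'(ℝ₊, M_Δ)`, with the convention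
`inf ∅ = 1/2`. -/
noncomputable def dJ {M : Type*} [MetricSpace M] (X Y : ℝ≥0 → OnePoint M) : ℝ :=
  sInf ({ε : ℝ | ε ∈ Set.Ioo (0 : ℝ) (1 / 2) ∧
    max (aDist ε X Y) (aDist ε Y X) < ENNReal.ofReal (ε / 2)} ∪ {1 / 2})

/-!
Symmetry of `dJ` is built into its definition. For the triangle inequality, suppose
`a_{ε₁}(X,Y) < ε₁/2` and `a_{ε₂}(Y,Z) < ε₂/2` are witnessed by time changes `λ₁, λ₂` and killing
times `t₁, t₂`. Then `λ₂ ∘ λ₁` with the killing time `min (λ₂ (λ₁ ε⁻¹)) (min t₂ (λ₂ t₁))`,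
`ε = ε₁ + ε₂`, witnesses `a_ε(X,Z) < ε/2`: log-slopes add under composition, so the `†`-norm is
subadditive, and a `†`-norm below `ε/2` forces `|λ s - s| ≤ ε` on `[0, ε + ε⁻¹]`, which keeps every
time inside the window where the other comparison applies. Adding the two infima gives the
triangle inequality for `dJ`.

If `dJ X Y = 0`, the same displacement bound gives, for every `s` and `γ > 0`, times
`u, v ∈ [s, s + γ]` with `d(X u, Y v) < γ`. Letting `γ → 0`, right-continuity makes `Y v` converge
both to `Y s` and to `X s`, and limits are unique because `M_Δ` is Hausdorff for locally
compact `M`.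
-/

open scoped Pointwise

section Kill

variable {M : Type*} {t : ℝ≥0∞} {X : ℝ≥0 → OnePoint M} {s : ℝ≥0}

lemma kill_of_lt (h : (s : ℝ≥0∞) < t) : kill t X s = X s := if_pos h

lemma kill_of_le (h : t ≤ s) : kill t X s = OnePoint.infty := if_neg h.not_gt

end Kill

section DistD

variable {M : Type*} [MetricSpace M]

@[simp] lemma distD_coe_coe (x y : M) : distD (x : OnePoint M) y = edist x y := rfl

@[simp] lemma distD_coe_infty (x : M) : distD (x : OnePoint M) OnePoint.infty = ⊤ := rfl

@[simp] lemma distD_infty_coe (y : M) : distD OnePoint.infty (y : OnePoint M) = ⊤ := rfl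

@[simp] lemma distD_infty_infty : distD (OnePoint.infty : OnePoint M) OnePoint.infty = 0 := rfl

lemma distD_triangle (x y z : OnePoint M) : distD x z ≤ distD x y + distD y z := by
  cases x <;> cases y <;> cases z <;> simp [edist_triangle]

lemma distD_ite_and_le (x y z : OnePoint M) (p q : Prop) [Decidable p] [Decidable q] :
    distD x (if p ∧ q then z else OnePoint.infty) ≤
      distD x (if p then y else OnePoint.infty) + distD y (if q then z else OnePoint.infty) := by
  by_cases hp : p
  · simpa [hp] using distD_triangle x y _
  · simp [hp]

lemma tendsto_coe_of_tendsto_distD {ι : Type*} {l : Filter ι} {f g : ι → OnePoint M} {a : M}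
    (hf : Tendsto f l (𝓝 a)) (hfg : Tendsto (fun i ↦ distD (f i) (g i)) l (𝓝 0)) :
    Tendsto g l (𝓝 a) := by
  rw [OnePoint.nhds_coe_eq] at hf ⊢
  intro U hU
  rw [mem_map]
  obtain ⟨r, hr, hball⟩ := EMetric.mem_nhds_iff.1 hU
  have hr2 : 0 < r / 2 := ENNReal.half_pos hr.ne'
  filter_upwards [hf (image_mem_map (Metric.eball_mem_nhds a hr2)),
    hfg.eventually (gt_mem_nhds hr2)] with i ⟨x, hxa, hfx⟩ hd
  rw [← hfx] at hd
  cases hg : g i with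
  | infty => simp [hg] at hd
  | coe y =>
    rw [hg, distD_coe_coe] at hd
    rw [mem_preimage, hg]
    refine hball ?_
    calc edist y a ≤ edist x y + edist x a := edist_triangle_left y a x
      _ < r / 2 + r / 2 := ENNReal.add_lt_add hd hxa
      _ = r := ENNReal.add_halves r

end DistD

section TimeChange

lemma comp_mem_timeChanges {l₁ l₂ : ℝ≥0 → ℝ≥0} (h₁ : l₁ ∈ TimeChanges) (h₂ : l₂ ∈ TimeChanges) :
    l₂ ∘ l₁ ∈ TimeChanges :=
  ⟨h₂.1.comp h₁.1, h₂.2.1.comp h₁.2.1, by simp [h₁.2.2, h₂.2.2]⟩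

noncomputable def logSlope (l : ℝ≥0 → ℝ≥0) (p q : ℝ≥0) : ℝ≥0∞ :=
  ENNReal.ofReal |Real.log (((l q : ℝ) - (l p : ℝ)) / ((q : ℝ) - (p : ℝ)))|

noncomputable def logSlopeSup (l : ℝ≥0 → ℝ≥0) (t : ℝ) : ℝ≥0∞ :=
  ⨆ p ∈ {p : ℝ≥0 × ℝ≥0 | p.1 < p.2 ∧ (p.2 : ℝ) ≤ t}, logSlope l p.1 p.2

variable {l l₁ l₂ : ℝ≥0 → ℝ≥0}

lemma dagNorm_eq (l : ℝ≥0 → ℝ≥0) (t : ℝ) :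
    dagNorm l t = ENNReal.ofReal (2 * max t 1) * logSlopeSup l t := rfl

lemma logSlope_le_logSlopeSup {t : ℝ} {p q : ℝ≥0} (hpq : p < q) (hq : (q : ℝ) ≤ t) :
    logSlope l p q ≤ logSlopeSup l t :=
  le_iSup₂ (f := fun p (_ : p ∈ {p : ℝ≥0 × ℝ≥0 | p.1 < p.2 ∧ (p.2 : ℝ) ≤ t}) ↦ logSlope l p.1 p.2)
    (p, q) ⟨hpq, hq⟩

lemma logSlopeSup_mono (l : ℝ≥0 → ℝ≥0) : Monotone (logSlopeSup l) :=
  fun _ _ h ↦ biSup_mono fun _ hp ↦ ⟨hp.1, hp.2.trans h⟩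

lemma logSlope_comp_le (hl₁ : StrictMono l₁) (hl₂ : StrictMono l₂) {p q : ℝ≥0} (hpq : p < q) :
    logSlope (l₂ ∘ l₁) p q ≤ logSlope l₂ (l₁ p) (l₁ q) + logSlope l₁ p q := by
  have hq : (0 : ℝ) < q - p := sub_pos.2 hpq
  have hq₁ : (0 : ℝ) < l₁ q - l₁ p := sub_pos.2 (hl₁ hpq)
  have hq₂ : (0 : ℝ) < l₂ (l₁ q) - l₂ (l₁ p) := sub_pos.2 (hl₂ (hl₁ hpq))
  have hsplit : ((l₂ (l₁ q) : ℝ) - l₂ (l₁ p)) / (q - p) =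
      ((l₂ (l₁ q) : ℝ) - l₂ (l₁ p)) / (l₁ q - l₁ p) * (((l₁ q : ℝ) - l₁ p) / (q - p)) := by
    field_simp
  rw [logSlope, logSlope, logSlope, ← ENNReal.ofReal_add (abs_nonneg _) (abs_nonneg _)]
  refine ENNReal.ofReal_le_ofReal ?_
  simpa only [Function.comp_apply, hsplit, Real.log_mul (div_pos hq₂ hq₁).ne' (div_pos hq₁ hq).ne']
    using abs_add_le _ _

lemma logSlopeSup_comp_le (hl₁ : StrictMono l₁) (hl₂ : StrictMono l₂) {t t₂ : ℝ}
    (hmaps : ∀ q : ℝ≥0, (q : ℝ) ≤ t → (l₁ q : ℝ) ≤ t₂) :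
    logSlopeSup (l₂ ∘ l₁) t ≤ logSlopeSup l₁ t + logSlopeSup l₂ t₂ := by
  refine iSup₂_le fun ⟨p, q⟩ ⟨hpq, hq⟩ ↦ (logSlope_comp_le hl₁ hl₂ hpq).trans ?_
  rw [add_comm (logSlopeSup l₁ t)]
  exact add_le_add (logSlope_le_logSlopeSup (hl₁ hpq) (hmaps q hq))
    (logSlope_le_logSlopeSup hpq hq)

lemma dagNorm_comp_le (hl₁ : StrictMono l₁) (hl₂ : StrictMono l₂) {t t₁ t₂ : ℝ}
    (ht₁ : t ≤ t₁) (ht₂ : t ≤ t₂) (hmaps : ∀ q : ℝ≥0, (q : ℝ) ≤ t → (l₁ q : ℝ) ≤ t₂) :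
    dagNorm (l₂ ∘ l₁) t ≤ dagNorm l₁ t₁ + dagNorm l₂ t₂ := by
  have hfactor {t' : ℝ} (h : t ≤ t') :
      ENNReal.ofReal (2 * max t 1) ≤ ENNReal.ofReal (2 * max t' 1) := by
    gcongr
  rw [dagNorm_eq, dagNorm_eq, dagNorm_eq]
  calc ENNReal.ofReal (2 * max t 1) * logSlopeSup (l₂ ∘ l₁) t
      ≤ ENNReal.ofReal (2 * max t 1) * (logSlopeSup l₁ t + logSlopeSup l₂ t₂) := by
        gcongr; exact logSlopeSup_comp_le hl₁ hl₂ hmaps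
    _ ≤ ENNReal.ofReal (2 * max t₁ 1) * logSlopeSup l₁ t₁ +
        ENNReal.ofReal (2 * max t₂ 1) * logSlopeSup l₂ t₂ := by
        rw [mul_add]
        exact add_le_add (mul_le_mul' (hfactor ht₁) (logSlopeSup_mono l₁ ht₁))
          (mul_le_mul' (hfactor ht₂) le_rfl)

lemma abs_timeChange_sub_le (hl : l ∈ TimeChanges) {ε : ℝ} (hε : 0 < ε) (hε₁ : ε ≤ 1)
    (hdag : dagNorm l (ε + ε⁻¹) < ENNReal.ofReal (ε / 2)) {q : ℝ≥0} (hq : (q : ℝ) ≤ ε + ε⁻¹) :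
    |(l q : ℝ) - q| ≤ ε := by
  rcases eq_or_ne q 0 with rfl | hq₀
  · simp [hl.2.2, hε.le]
  replace hq₀ : 0 < q := pos_iff_ne_zero.2 hq₀
  have hq₀' : (0 : ℝ) < q := hq₀
  have hr : (0 : ℝ) < l q / q := div_pos (by simpa [hl.2.2] using hl.1 hq₀) hq₀'
  have hwin : ε⁻¹ ≤ max (ε + ε⁻¹) 1 := le_max_of_le_left (by linarith)
  have hlog : |Real.log (l q / q)| ≤ ε ^ 2 / 4 := by
    have h := (mul_le_mul' le_rfl (logSlope_le_logSlopeSup (l := l) hq₀ hq)).trans_lt hdag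
    rw [logSlope, ← ENNReal.ofReal_mul (by positivity),
      ENNReal.ofReal_lt_ofReal_iff (by positivity)] at h
    simp only [hl.2.2, NNReal.coe_zero, sub_zero] at h
    have h' : ε⁻¹ * |Real.log (l q / q)| ≤ ε / 4 := by nlinarith [abs_nonneg (Real.log (l q / q))]
    calc |Real.log (l q / q)| = ε * (ε⁻¹ * |Real.log (l q / q)|) := by field_simp
      _ ≤ ε * (ε / 4) := by gcongr
      _ = ε ^ 2 / 4 := by ring
  have hr₁ : |(l q : ℝ) / q - 1| ≤ ε ^ 2 / 2 := by
    have h := Real.abs_exp_sub_one_le (x := Real.log (l q / q)) (by nlinarith)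
    rw [Real.exp_log hr] at h
    linarith
  calc |(l q : ℝ) - q| = q * |(l q : ℝ) / q - 1| := by
        rw [← abs_of_pos hq₀', ← abs_mul, abs_of_pos hq₀', mul_sub,
          mul_div_cancel₀ _ hq₀'.ne', mul_one]
    _ ≤ (ε + ε⁻¹) * (ε ^ 2 / 2) := by gcongr
    _ = (ε ^ 3 + ε) / 2 := by field_simp
    _ ≤ ε := by nlinarith

end TimeChange

section ADist

variable {M : Type*} [MetricSpace M] {X Y Z : ℝ≥0 → OnePoint M}

lemma exists_of_aDist_lt {ε : ℝ} {c : ℝ≥0∞} (h : aDist ε X Y < c) :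
    ∃ t : ℝ≥0, |(t : ℝ) - ε⁻¹| ≤ ε ∧ ∃ l ∈ TimeChanges, dagNorm l (ε + ε⁻¹) < c ∧
      ∃ A < c, ∀ s : ℝ≥0, (s : ℝ) ≤ ε + ε⁻¹ →
        distD (kill (ENNReal.ofReal ε⁻¹) X s) (kill t Y (l s)) ≤ A := by
  simp only [aDist, iInf_lt_iff, max_lt_iff, exists_prop] at h
  obtain ⟨t, ht, l, hl, hdag, hsup⟩ := h
  refine ⟨t, ht, l, hl, hdag, _, hsup, fun s hs ↦ ?_⟩
  exact le_iSup₂ (f := fun (s : ℝ≥0) (_ : s ∈ {s : ℝ≥0 | (s : ℝ) ≤ ε + ε⁻¹}) ↦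
    distD (kill (ENNReal.ofReal ε⁻¹) X s) (kill t Y (l s))) s hs

lemma aDist_le_of_forall {ε : ℝ} {t : ℝ≥0} (ht : |(t : ℝ) - ε⁻¹| ≤ ε) {l : ℝ≥0 → ℝ≥0}
    (hl : l ∈ TimeChanges) {A : ℝ≥0∞} (hA : ∀ s : ℝ≥0, (s : ℝ) ≤ ε + ε⁻¹ →
      distD (kill (ENNReal.ofReal ε⁻¹) X s) (kill t Y (l s)) ≤ A) :
    aDist ε X Y ≤ max (dagNorm l (ε + ε⁻¹)) A :=
  iInf₂_le_of_le t ht (iInf₂_le_of_le l hl (max_le_max le_rfl (iSup₂_le hA)))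

lemma distD_kill_comp_le {l₁ l₂ : ℝ≥0 → ℝ≥0} (hl₁ : StrictMono l₁) (hl₂ : StrictMono l₂)
    {c t₁ t₂ : ℝ≥0} {a₁ a₂ : ℝ≥0∞} (ha₁ : ∀ s < c, (s : ℝ≥0∞) < a₁)
    (ha₂ : ∀ s < c, (l₁ s : ℝ≥0∞) < a₂) (s : ℝ≥0) :
    distD (kill c X s) (kill ((min (l₂ (l₁ c)) (min t₂ (l₂ t₁)) : ℝ≥0) : ℝ≥0∞) Z (l₂ (l₁ s))) ≤
      distD (kill a₁ X s) (kill t₁ Y (l₁ s)) +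
        distD (kill a₂ Y (l₁ s)) (kill t₂ Z (l₂ (l₁ s))) := by
  by_cases hs : s < c
  · have halive : ((l₂ (l₁ s) : ℝ≥0) : ℝ≥0∞) < (min (l₂ (l₁ c)) (min t₂ (l₂ t₁)) : ℝ≥0) ↔
        (l₁ s : ℝ≥0∞) < t₁ ∧ (l₂ (l₁ s) : ℝ≥0∞) < t₂ := by
      simp only [ENNReal.coe_lt_coe, lt_min_iff, hl₂.lt_iff_lt, hl₁.lt_iff_lt, hs, true_and,
        and_comm]
    rw [kill_of_lt (ENNReal.coe_lt_coe.2 hs), kill_of_lt (ha₁ s hs), kill_of_lt (ha₂ s hs)]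
    simp only [kill]
    rw [if_congr halive rfl rfl]
    exact distD_ite_and_le _ _ _ _ _
  · have hcs : c ≤ s := not_lt.1 hs
    rw [kill_of_le (ENNReal.coe_le_coe.2 hcs), kill_of_le (ENNReal.coe_le_coe.2
      ((min_le_left _ _).trans (hl₂.monotone (hl₁.monotone hcs))))]
    simp

lemma inv_add_two_mul_le_inv {a b : ℝ} (ha : 0 < a) (hb : 0 < b) (hab : a + b ≤ 1 / 2) :
    (a + b)⁻¹ + 2 * a ≤ b⁻¹ := by
  have h : b⁻¹ - ((a + b)⁻¹ + 2 * a) = a * (1 - 2 * b * (a + b)) / (b * (a + b)) := by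
    field_simp
    ring
  rw [← sub_nonneg, h]
  apply div_nonneg (mul_nonneg ha.le (by nlinarith)) (by positivity)

lemma aDist_add_lt {e₁ e₂ : ℝ} (he₁ : 0 < e₁) (he₂ : 0 < e₂) (he : e₁ + e₂ ≤ 1 / 2)
    (hXY : aDist e₁ X Y < ENNReal.ofReal (e₁ / 2)) (hYZ : aDist e₂ Y Z < ENNReal.ofReal (e₂ / 2)) :
    aDist (e₁ + e₂) X Z < ENNReal.ofReal ((e₁ + e₂) / 2) := by
  obtain ⟨t₁, ht₁, l₁, hl₁, hdag₁, A₁, hA₁, hd₁⟩ := exists_of_aDist_lt hXY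
  obtain ⟨t₂, ht₂, l₂, hl₂, hdag₂, A₂, hA₂, hd₂⟩ := exists_of_aDist_lt hYZ
  set e := e₁ + e₂ with he_def
  have hnear₁ {q : ℝ≥0} (hq : (q : ℝ) ≤ e₁ + e₁⁻¹) := abs_le.1
    (abs_timeChange_sub_le hl₁ he₁ (by linarith) hdag₁ hq)
  have hnear₂ {q : ℝ≥0} (hq : (q : ℝ) ≤ e₂ + e₂⁻¹) := abs_le.1
    (abs_timeChange_sub_le hl₂ he₂ (by linarith) hdag₂ hq)
  have hgap₁ : e⁻¹ + 2 * e₂ ≤ e₁⁻¹ := by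
    simpa only [he_def, add_comm e₂] using inv_add_two_mul_le_inv he₂ he₁ (by linarith)
  have hgap₂ : e⁻¹ + 2 * e₁ ≤ e₂⁻¹ := inv_add_two_mul_le_inv he₁ he₂ he
  have hwin₁ : e + e⁻¹ ≤ e₁ + e₁⁻¹ := by linarith
  have hwin₂ : e + e⁻¹ ≤ e₂ + e₂⁻¹ := by linarith
  have hmaps (q : ℝ≥0) (hq : (q : ℝ) ≤ e + e⁻¹) : (l₁ q : ℝ) ≤ e₂ + e₂⁻¹ := by
    linarith [hnear₁ (hq.trans hwin₁)]
  set c := e⁻¹.toNNReal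
  have hc : (c : ℝ) = e⁻¹ := Real.coe_toNNReal _ (by positivity)
  have hl₁c := hnear₁ (q := c) (by linarith)
  have hl₂l₁c := hnear₂ (hmaps c (by linarith))
  have ht : |((min (l₂ (l₁ c)) (min t₂ (l₂ t₁)) : ℝ≥0) : ℝ) - e⁻¹| ≤ e := by
    obtain ⟨ht₁', -⟩ := abs_le.1 ht₁
    obtain ⟨ht₂', -⟩ := abs_le.1 ht₂
    have hl₂t₁ : e⁻¹ - e ≤ l₂ t₁ := by
      rcases le_or_gt (l₁ c) t₁ with h | h
      · linarith [NNReal.coe_le_coe.2 (hl₂.1.monotone h)]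
      · linarith [hnear₂ (q := t₁) (by linarith [NNReal.coe_lt_coe.2 h])]
    have hlow : e⁻¹ - e ≤ min (l₂ (l₁ c) : ℝ) (min (t₂ : ℝ) (l₂ t₁)) :=
      le_min (by linarith) (le_min (by linarith) hl₂t₁)
    have hup : min (l₂ (l₁ c) : ℝ) (min (t₂ : ℝ) (l₂ t₁)) ≤ l₂ (l₁ c) := min_le_left _ _
    rw [NNReal.coe_min, NNReal.coe_min, abs_le]
    constructor <;> linarith
  have hhalf : ENNReal.ofReal (e₁ / 2) + ENNReal.ofReal (e₂ / 2) = ENNReal.ofReal (e / 2) := by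
    rw [← ENNReal.ofReal_add (by positivity) (by positivity), add_div]
  refine (aDist_le_of_forall ht (comp_mem_timeChanges hl₁ hl₂) (A := A₁ + A₂)
    fun s hs ↦ ?_).trans_lt (max_lt ?_ ?_)
  · have ha₁ (s : ℝ≥0) (hs : s < c) : (s : ℝ≥0∞) < ENNReal.ofReal e₁⁻¹ := by
      rw [ENNReal.coe_lt_ofReal]
      linarith [NNReal.coe_lt_coe.2 hs]
    have ha₂ (s : ℝ≥0) (hs : s < c) : (l₁ s : ℝ≥0∞) < ENNReal.ofReal e₂⁻¹ := by
      rw [ENNReal.coe_lt_ofReal]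
      linarith [NNReal.coe_lt_coe.2 (hl₁.1 hs)]
    exact (distD_kill_comp_le hl₁.1 hl₂.1 ha₁ ha₂ s).trans
      (add_le_add (hd₁ s (hs.trans hwin₁)) (hd₂ (l₁ s) (hmaps s hs)))
  · calc dagNorm (l₂ ∘ l₁) (e + e⁻¹) ≤ dagNorm l₁ (e₁ + e₁⁻¹) + dagNorm l₂ (e₂ + e₂⁻¹) :=
          dagNorm_comp_le hl₁.1 hl₂.1 hwin₁ hwin₂ hmaps
      _ < ENNReal.ofReal (e₁ / 2) + ENNReal.ofReal (e₂ / 2) := ENNReal.add_lt_add hdag₁ hdag₂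
      _ = ENNReal.ofReal (e / 2) := hhalf
  · exact hhalf ▸ ENNReal.add_lt_add hA₁ hA₂

end ADist

section DJ

variable {M : Type*} [MetricSpace M] {X Y Z : ℝ≥0 → OnePoint M}

def dJCandidates (X Y : ℝ≥0 → OnePoint M) : Set ℝ :=
  {ε : ℝ | ε ∈ Set.Ioo (0 : ℝ) (1 / 2) ∧
    max (aDist ε X Y) (aDist ε Y X) < ENNReal.ofReal (ε / 2)} ∪ {1 / 2}

lemma dJ_eq_sInf (X Y : ℝ≥0 → OnePoint M) : dJ X Y = sInf (dJCandidates X Y) := rfl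

lemma dJCandidates_subset_Ioc : dJCandidates X Y ⊆ Ioc 0 (1 / 2) := by
  rintro ε (⟨⟨h₀, h₁⟩, -⟩ | rfl)
  exacts [⟨h₀, h₁.le⟩, by norm_num]

lemma dJCandidates_nonempty : (dJCandidates X Y).Nonempty := ⟨1 / 2, Or.inr rfl⟩

lemma bddBelow_dJCandidates : BddBelow (dJCandidates X Y) :=
  ⟨0, fun _ hε ↦ (dJCandidates_subset_Ioc hε).1.le⟩

lemma dJ_le_half : dJ X Y ≤ 1 / 2 := csInf_le bddBelow_dJCandidates (Or.inr rfl)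

lemma dJ_comm (X Y : ℝ≥0 → OnePoint M) : dJ X Y = dJ Y X := by
  simp only [dJ_eq_sInf, dJCandidates, max_comm]

lemma dJ_le_add_of_mem {a b : ℝ} (ha : a ∈ dJCandidates X Y) (hb : b ∈ dJCandidates Y Z) :
    dJ X Z ≤ a + b := by
  obtain ⟨ha₀, -⟩ := dJCandidates_subset_Ioc ha
  obtain ⟨hb₀, -⟩ := dJCandidates_subset_Ioc hb
  rcases le_or_gt (1 / 2) (a + b) with hab | hab
  · exact dJ_le_half.trans hab
  obtain ⟨-, hXY⟩ := ha.resolve_right (by rintro rfl; linarith)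
  obtain ⟨-, hYZ⟩ := hb.resolve_right (by rintro rfl; linarith)
  refine csInf_le bddBelow_dJCandidates (Or.inl ⟨⟨by linarith, hab⟩, max_lt ?_ ?_⟩)
  · exact aDist_add_lt ha₀ hb₀ hab.le ((le_max_left _ _).trans_lt hXY)
      ((le_max_left _ _).trans_lt hYZ)
  · rw [add_comm a b]
    exact aDist_add_lt hb₀ ha₀ (by linarith) ((le_max_right _ _).trans_lt hYZ)
      ((le_max_right _ _).trans_lt hXY)

lemma dJ_triangle (X Y Z : ℝ≥0 → OnePoint M) : dJ X Z ≤ dJ X Y + dJ Y Z := by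
  rw [dJ_eq_sInf X Y, dJ_eq_sInf Y Z, ← csInf_add dJCandidates_nonempty bddBelow_dJCandidates
    dJCandidates_nonempty bddBelow_dJCandidates]
  refine le_csInf (dJCandidates_nonempty.add dJCandidates_nonempty) ?_
  rintro _ ⟨a, ha, b, hb, rfl⟩
  exact dJ_le_add_of_mem ha hb

lemma exists_aDist_lt_of_dJ_lt {θ : ℝ} (h : dJ X Y < θ) (hθ : θ ≤ 1 / 2) :
    ∃ ε ∈ Ioo 0 θ, aDist ε X Y < ENNReal.ofReal (ε / 2) := by
  obtain ⟨ε, hε, hεθ⟩ := exists_lt_of_csInf_lt dJCandidates_nonempty h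
  rcases hε with ⟨⟨hε₀, -⟩, hmax⟩ | rfl
  · exact ⟨ε, ⟨hε₀, hεθ⟩, (le_max_left _ _).trans_lt hmax⟩
  · exact absurd hθ hεθ.not_ge

lemma exists_near_pair_of_dJ_eq_zero (h : dJ X Y = 0) (s : ℝ≥0) {γ : ℝ≥0} (hγ : 0 < γ) :
    ∃ u ∈ Icc s (s + γ), ∃ v ∈ Icc s (s + γ), distD (X u) (Y v) < γ := by
  have hs : (0 : ℝ) < (s : ℝ) + 2 := by positivity
  have hθ : min ((γ : ℝ) / 2) ((s : ℝ) + 2)⁻¹ ≤ 1 / 2 :=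
    (min_le_right _ _).trans (inv_le_of_inv_le₀ (by norm_num) (by linarith [s.coe_nonneg]))
  obtain ⟨ε, ⟨hε₀, hεθ⟩, hε⟩ :=
    exists_aDist_lt_of_dJ_lt (h ▸ lt_min (by positivity) (inv_pos.2 hs)) hθ
  obtain ⟨t, ht, l, hl, hdag, A, hA, hd⟩ := exists_of_aDist_lt hε
  have hεγ : ε < γ / 2 := hεθ.trans_le (min_le_left _ _)
  have hεs : (s : ℝ) + 2 < ε⁻¹ := (lt_inv_comm₀ hε₀ hs).1 (hεθ.trans_le (min_le_right _ _))
  set u := s + ε.toNNReal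
  have hu : (u : ℝ) = s + ε := by simp [u, hε₀.le]
  obtain ⟨hlu₁, hlu₂⟩ := abs_le.1
    (abs_timeChange_sub_le hl hε₀ (by linarith) hdag (q := u) (by rw [hu]; linarith))
  obtain ⟨ht₁, -⟩ := abs_le.1 ht
  have hIcc {w : ℝ≥0} (h₁ : (s : ℝ) ≤ w) (h₂ : (w : ℝ) ≤ s + 2 * ε) : w ∈ Icc s (s + γ) :=
    ⟨NNReal.coe_le_coe.1 h₁, NNReal.coe_le_coe.1 (by push_cast; linarith)⟩
  refine ⟨u, hIcc (by linarith) (by linarith), l u, hIcc (by linarith) (by linarith), ?_⟩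
  have hpt := hd u (by rw [hu]; linarith)
  rw [kill_of_lt (ENNReal.coe_lt_ofReal.2 (by linarith)),
    kill_of_lt (ENNReal.coe_lt_coe.2 (NNReal.coe_lt_coe.1 (by linarith)))] at hpt
  calc distD (X u) (Y (l u)) ≤ A := hpt
    _ < ENNReal.ofReal (ε / 2) := hA
    _ ≤ γ := by rw [← ENNReal.ofReal_coe_nnreal]; exact ENNReal.ofReal_le_ofReal (by linarith)

lemma apply_eq_coe_of_dJ_eq_zero [LocallyCompactSpace M] (h : dJ X Y = 0) {s : ℝ≥0}
    (hX : ContinuousWithinAt X (Ici s) s) (hY : ContinuousWithinAt Y (Ici s) s) {a : M}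
    (ha : X s = a) : Y s = a := by
  choose u hu v hv hd using fun n : ℕ ↦
    exists_near_pair_of_dJ_eq_zero h s (γ := 1 / (n + 1)) (by positivity)
  have hγ : Tendsto (fun n : ℕ ↦ (1 / (n + 1) : ℝ≥0)) atTop (𝓝 0) :=
    tendsto_one_div_add_atTop_nhds_zero_nat
  have hwithin (w : ℕ → ℝ≥0) (hw : ∀ n : ℕ, w n ∈ Icc s (s + 1 / ((n : ℝ≥0) + 1))) :
      Tendsto w atTop (𝓝[≥] s) :=
    tendsto_nhdsWithin_iff.2 ⟨tendsto_of_tendsto_of_tendsto_of_le_of_le tendsto_const_nhds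
      (by simpa using tendsto_const_nhds.add hγ) (fun n ↦ (hw n).1) (fun n ↦ (hw n).2),
      Eventually.of_forall fun n ↦ (hw n).1⟩
  have hXu : Tendsto (fun n ↦ X (u n)) atTop (𝓝 a) := ha ▸ hX.tendsto.comp (hwithin u hu)
  have hd₀ : Tendsto (fun n ↦ distD (X (u n)) (Y (v n))) atTop (𝓝 0) :=
    tendsto_of_tendsto_of_tendsto_of_le_of_le tendsto_const_nhds
      (by simpa using ENNReal.tendsto_coe.2 hγ) (fun _ ↦ zero_le) (fun n ↦ (hd n).le)
  exact tendsto_nhds_unique (hY.tendsto.comp (hwithin v hv)) (tendsto_coe_of_tendsto_distD hXu hd₀)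

lemma eq_of_dJ_eq_zero [LocallyCompactSpace M] (hX : ∀ t, ContinuousWithinAt X (Ici t) t)
    (hY : ∀ t, ContinuousWithinAt Y (Ici t) t) (h : dJ X Y = 0) : X = Y := by
  funext s
  cases hXs : X s with
  | coe a => exact (apply_eq_coe_of_dJ_eq_zero h (hX s) (hY s) hXs).symm
  | infty =>
    cases hYs : Y s with
    | infty => rfl
    | coe b =>
      have := apply_eq_coe_of_dJ_eq_zero (dJ_comm X Y ▸ h) (hY s) (hX s) hYs
      simp [hXs] at this

end DJ

theorem stmt12 {M : Type*} [MetricSpace M] [LocallyCompactSpace M] :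
    (∀ X ∈ DPrime M, ∀ Y ∈ DPrime M, dJ X Y = dJ Y X) ∧
    (∀ X ∈ DPrime M, ∀ Y ∈ DPrime M, ∀ Z ∈ DPrime M, dJ X Z ≤ dJ X Y + dJ Y Z) ∧
    (∀ X ∈ DPrime M, ∀ Y ∈ DPrime M, dJ X Y = 0 → X = Y) :=
  ⟨fun X _ Y _ ↦ dJ_comm X Y, fun X _ Y _ Z _ ↦ dJ_triangle X Y Z,
    fun _ hX _ hY ↦ eq_of_dJ_eq_zero hX.1 hY.1⟩
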